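/- Let L be holomorphic on an open set containing the closed unit disk, and let a, b ∈ ℂ with |a|² − |b|² = 1. Then ∫_{|w|<1} L'(w) · (2b/(conj(a) − b·conj(w))) d²w = 2π (L(b/conj(a)) − L(0)). -/

import Mathlib

/-!
On the circle `‖w‖ = r` we have `conj w = r² / w`, so the kernel `2b / (conj a - b conj w)` equals
`2c · w / (w - c r²)` with `c = b / conj a`, and the generalized mean value property averages the
integrand over that circle to `2c · L'(c r²)`. In polar coordinates the disk integral becomes
`∫₀¹ 2π · 2c r · L'(c r²) dr`, and `2c r · L'(c r²)` is the derivative of `r ↦ L(c r²)`.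
-/

open MeasureTheory Complex Set Metric Real ComplexConjugate

theorem Complex.polarCoord_symm_eq_circleMap (r θ : ℝ) :
    Complex.polarCoord.symm (r, θ) = circleMap 0 r θ := by
  simp [circleMap, Complex.exp_mul_I, ← Complex.ofReal_cos, ← Complex.ofReal_sin]

theorem setIntegral_Ioo_circleMap_eq_two_pi_smul_circleAverage {E : Type*} [NormedAddCommGroup E]
    [NormedSpace ℝ E] (f : ℂ → E) (r : ℝ) :
    ∫ θ in Ioo (-π) π, f (circleMap 0 r θ) = (2 * π) • circleAverage f 0 r := by
  have hper : Function.Periodic (fun θ => f (circleMap 0 r θ)) (2 * π) :=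
    fun θ => by simp only [periodic_circleMap 0 r θ]
  rw [← integral_Ioc_eq_integral_Ioo,
    ← intervalIntegral.integral_of_le (by linarith [pi_pos]), circleAverage_def,
    smul_inv_smul₀ (by positivity)]
  simpa [show -π + 2 * π = π by ring] using hper.intervalIntegral_add_eq (-π) 0

theorem setIntegral_ball_eq_integral_circleAverage {E : Type*} [NormedAddCommGroup E]
    [NormedSpace ℝ E] {f : ℂ → E} {R : ℝ} (hf : ContinuousOn f (closedBall 0 R)) :
    ∫ z in ball 0 R, f z = ∫ r in Ioo 0 R, (2 * π * r) • circleAverage f 0 r := by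
  set F : ℝ × ℝ → E := fun p => p.1 • f (Complex.polarCoord.symm p)
  have hsymm : Continuous Complex.polarCoord.symm := by
    rw [funext Complex.polarCoord_symm_apply]; fun_prop
  have hF : IntegrableOn F (Ioo 0 R ×ˢ Ioo (-π) π) := by
    refine (ContinuousOn.integrableOn_compact (isCompact_Icc.prod isCompact_Icc) ?_).mono_set
      (prod_mono Ioo_subset_Icc_self Ioo_subset_Icc_self)
    refine continuous_fst.continuousOn.smul (hf.comp hsymm.continuousOn fun p hp => ?_)
    simpa [abs_of_nonneg hp.1.1] using hp.1.2
  have hpolar : polarCoord.target ∩ Complex.polarCoord.symm ⁻¹' ball 0 R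
      = Ioo 0 R ×ˢ Ioo (-π) π := by
    ext ⟨r, θ⟩
    simp only [mem_inter_iff, polarCoord_target, mem_prod, mem_Ioi, mem_Ioo, mem_preimage,
      mem_ball_zero_iff, Complex.norm_polarCoord_symm]
    constructor
    · rintro ⟨⟨hr, hθ⟩, hrR⟩
      exact ⟨⟨hr, (abs_lt.1 hrR).2⟩, hθ⟩
    · rintro ⟨⟨hr, hrR⟩, hθ⟩
      exact ⟨⟨hr, hθ⟩, by rwa [abs_of_pos hr]⟩
  calc ∫ z in ball 0 R, f z
      = ∫ p in polarCoord.target, (Complex.polarCoord.symm ⁻¹' ball 0 R).indicator F p := by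
        rw [← integral_indicator measurableSet_ball, ← Complex.integral_comp_polarCoord_symm]
        simp only [F, indicator_smul_apply, ← indicator_comp_right]
        rfl
    _ = ∫ p in Ioo 0 R ×ˢ Ioo (-π) π, F p := by
        rw [setIntegral_indicator (hsymm.measurable measurableSet_ball), hpolar]
    _ = ∫ r in Ioo 0 R, (2 * π * r) • circleAverage f 0 r := by
        refine (setIntegral_prod F hF).trans ?_
        refine setIntegral_congr_fun measurableSet_Ioo fun r _ => ?_
        simp only [F, Complex.polarCoord_symm_eq_circleMap, integral_smul,
          setIntegral_Ioo_circleMap_eq_two_pi_smul_circleAverage, smul_smul]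
        ring_nf

theorem conj_sub_mul_conj_ne_zero {a b w : ℂ} (h : ‖b‖ * ‖w‖ < ‖a‖) :
    conj a - b * conj w ≠ 0 := by
  rw [sub_ne_zero]
  intro hab
  have := congrArg norm hab
  rw [norm_conj, norm_mul, norm_conj] at this
  linarith

theorem div_conj_sub_mul_conj_eq_of_norm_eq {a b w : ℂ} {r : ℝ} (hr : 0 < r) (hw : ‖w‖ = r)
    (hbr : ‖b‖ * r < ‖a‖) :
    b / (conj a - b * conj w) = b / conj a * (w / (w - b / conj a * r ^ 2)) := by
  have hw0 : w ≠ 0 := by rw [← norm_ne_zero_iff, hw]; exact hr.ne'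
  have ha : conj a ≠ 0 := by
    rw [Ne, map_eq_zero, ← norm_eq_zero]; nlinarith [norm_nonneg b]
  have hD : conj a - b * conj w ≠ 0 := conj_sub_mul_conj_ne_zero (hw ▸ hbr)
  have hwD : w * (conj a - b * conj w) = conj a * (w - b / conj a * r ^ 2) := by
    rw [mul_sub, ← hw, ← conj_mul']; field_simp
  have hsub : w - b / conj a * r ^ 2 ≠ 0 := by
    intro h
    rw [h, mul_zero] at hwD
    exact mul_ne_zero hw0 hD hwD
  rw [div_mul_div_comm, div_eq_div_iff hD (mul_ne_zero ha hsub)]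
  linear_combination (-b) * hwD

theorem circleAverage_mul_div_conj_sub {f : ℂ → ℂ} {a b : ℂ} {r : ℝ} (hr : 0 < r)
    (hf : DiffContOnCl ℂ f (ball 0 r)) (hbr : ‖b‖ * r < ‖a‖) :
    circleAverage (fun w => f w * (b / (conj a - b * conj w))) 0 r
      = b / conj a * f (b / conj a * r ^ 2) := by
  have hc : ‖b / conj a‖ * r < 1 := by
    rw [norm_div, norm_conj, div_mul_eq_mul_div, div_lt_one (by nlinarith [norm_nonneg b])]
    exact hbr
  have hmem : b / conj a * r ^ 2 ∈ ball 0 |r| := by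
    rw [mem_ball_zero_iff, abs_of_pos hr, norm_mul, norm_pow, norm_real, norm_of_nonneg hr.le]
    nlinarith
  rw [← abs_of_pos hr] at hf
  refine (circleAverage_congr_sphere fun w hw => ?_).trans
    ((hf.const_smul (b / conj a)).circleAverage_smul_div hmem)
  rw [mem_sphere_zero_iff_norm, abs_of_pos hr] at hw
  simp only [Pi.smul_apply, smul_eq_mul, sub_zero, div_conj_sub_mul_conj_eq_of_norm_eq hr hw hbr]
  ring

theorem integral_deriv_comp_mul_deriv_of_differentiableOn {L : ℂ → ℂ} {U : Set ℂ} (hU : IsOpen U)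
    (hL : DifferentiableOn ℂ L U) {γ γ' : ℝ → ℂ} {s t : ℝ}
    (hγ : ∀ x ∈ uIcc s t, HasDerivAt γ (γ' x) x) (hγ' : ContinuousOn γ' (uIcc s t))
    (hγU : MapsTo γ (uIcc s t) U) :
    ∫ x in s..t, deriv L (γ x) * γ' x = L (γ t) - L (γ s) := by
  have hLγ : ∀ x ∈ uIcc s t, HasDerivAt (L ∘ γ) (deriv L (γ x) * γ' x) x := fun x hx =>
    ((hL.differentiableAt (hU.mem_nhds (hγU hx))).hasDerivAt.comp x (hγ x hx))
  refine intervalIntegral.integral_eq_sub_of_hasDerivAt hLγ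
    (ContinuousOn.intervalIntegrable (ContinuousOn.mul ?_ hγ'))
  exact ((hL.analyticOnNhd hU).deriv.continuousOn).comp
    (fun x hx => (hγ x hx).continuousAt.continuousWithinAt) hγU

theorem circleAverage_deriv_mul_two_mul_div_conj_sub {L : ℂ → ℂ} {U : Set ℂ} (hU : IsOpen U)
    (hL : DifferentiableOn ℂ L U) {a b : ℂ} {r : ℝ} (hr : 0 < r) (hrU : closedBall 0 r ⊆ U)
    (hbr : ‖b‖ * r < ‖a‖) :
    circleAverage (fun w => deriv L w * (2 * b / (conj a - b * conj w))) 0 r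
      = 2 * (b / conj a) * deriv L (b / conj a * r ^ 2) := by
  have hf : DiffContOnCl ℂ (fun w => 2 * deriv L w) (ball 0 r) :=
    (((hL.analyticOnNhd hU).deriv.differentiableOn.const_mul 2).mono
      (closure_ball (0 : ℂ) hr.ne' ▸ hrU)).diffContOnCl
  have hkernel : (fun w => deriv L w * (2 * b / (conj a - b * conj w)))
      = fun w => 2 * deriv L w * (b / (conj a - b * conj w)) := by
    funext w; ring
  rw [hkernel, circleAverage_mul_div_conj_sub hr hf hbr]
  ring

theorem moebius_kernel_integral (U : Set ℂ) (hU : IsOpen U)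
    (hDU : {z : ℂ | ‖z‖ ≤ 1} ⊆ U)
    (L : ℂ → ℂ) (hL : DifferentiableOn ℂ L U)
    (a b : ℂ) (hab : ‖a‖ ^ 2 - ‖b‖ ^ 2 = 1) :
    (∫ w in {w : ℂ | ‖w‖ < 1},
        deriv L w * (2 * b / ((starRingEnd ℂ) a - b * (starRingEnd ℂ) w))) =
      2 * (Real.pi : ℂ) * (L (b / (starRingEnd ℂ) a) - L 0) := by
  set g := fun w => deriv L w * (2 * b / (conj a - b * conj w))
  set c := b / conj a
  have hba : ‖b‖ < ‖a‖ := by nlinarith [norm_nonneg a, norm_nonneg b]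
  have hc : ‖c‖ < 1 := by
    rw [norm_div, norm_conj, div_lt_one (by nlinarith [norm_nonneg b])]; exact hba
  have hball : closedBall (0 : ℂ) 1 ⊆ U := fun z hz => hDU (by simpa using hz)
  have hg : ContinuousOn g (closedBall 0 1) := by
    refine ((hL.analyticOnNhd hU).deriv.continuousOn.mono hball).mul
      (continuousOn_const.div (by fun_prop) fun w hw => conj_sub_mul_conj_ne_zero ?_)
    nlinarith [mem_closedBall_zero_iff.1 hw, norm_nonneg b]
  have hpath : MapsTo (fun r : ℝ => c * (r : ℂ) ^ 2) (uIcc 0 1) U := fun r hr => by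
    rw [uIcc_of_le zero_le_one] at hr
    refine hball (mem_closedBall_zero_iff.2 ?_)
    rw [norm_mul, norm_pow, norm_real, norm_of_nonneg hr.1]
    nlinarith [norm_nonneg c, hr.1, hr.2]
  have hderiv (r : ℝ) : HasDerivAt (fun r : ℝ => c * (r : ℂ) ^ 2) (c * (2 * r)) r :=
    (((hasDerivAt_id r).ofReal_comp.pow 2).const_mul c).congr_deriv (by simp)
  calc _ = ∫ r in Ioo 0 1, (2 * π * r) • circleAverage g 0 r := by
        rw [← setIntegral_ball_eq_integral_circleAverage hg]
        congr 2
        ext w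
        simp
    _ = ∫ r in (0 : ℝ)..1, 2 * π * (deriv L (c * (r : ℂ) ^ 2) * (c * (2 * r))) := by
        rw [intervalIntegral.integral_of_le zero_le_one, integral_Ioc_eq_integral_Ioo]
        refine setIntegral_congr_fun measurableSet_Ioo fun r ⟨hr0, hr1⟩ => ?_
        rw [circleAverage_deriv_mul_two_mul_div_conj_sub hU hL hr0
          ((closedBall_subset_closedBall hr1.le).trans hball) (by nlinarith [norm_nonneg b]),
          real_smul]
        push_cast
        ring
    _ = 2 * π * (L c - L 0) := by
        rw [intervalIntegral.integral_const_mul, integral_deriv_comp_mul_deriv_of_differentiableOn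
          hU hL (fun r _ => hderiv r) (by fun_prop) hpath]
        simp
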